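/- Let T be a tensor field on a Riemannian manifold M and let (v,B) be a section of E = TM ⊕ 𝔰𝔬(TM) satisfying ∇_v T = B·T at every point. Then ∇̃_X(v,B) satisfies the same equation (with respect to T) for all vector fields X if and only if (v,B) also satisfies ∇_v(∇T) = B·(∇T). -/
import Mathlib


/-- An abstract (algebraic) model of a Riemannian manifold `M` with its module of (smooth)
vector fields `VF`, the action of vector fields on functions, the Lie bracket, the Riemannian
metric `g` (with values in functions on `M`) and the Levi-Civita connection `D = ∇`
(`D X Y = ∇_X Y`), subject to the usual axioms: tensoriality, Leibniz rules, symmetry of the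
metric, metric compatibility and torsion-freeness. -/
structure LeviCivitaSetting (M VF : Type*) [AddCommGroup VF] [Module ℝ VF] : Type _ where
  /-- derivative of a function along a vector field, `act X f = X(f)` -/
  act : VF → (M → ℝ) → (M → ℝ)
  /-- multiplication of a vector field by a function -/
  fsmul : (M → ℝ) → VF → VF
  /-- the Lie bracket of vector fields -/
  bracket : VF → VF → VF
  /-- the Riemannian metric -/
  g : VF → VF → (M → ℝ)
  /-- the Levi-Civita connection, `D X Y = ∇_X Y` -/
  D : VF → VF → VF
  act_add : ∀ X Y f, act (X + Y) f = act X f + act Y f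
  act_fsmul : ∀ f X h, act (fsmul f X) h = f * act X h
  act_f_add : ∀ X f h, act X (f + h) = act X f + act X h
  act_f_mul : ∀ X f h, act X (f * h) = f * act X h + h * act X f
  act_bracket : ∀ X Y f, act (bracket X Y) f = act X (act Y f) - act Y (act X f)
  g_symm : ∀ X Y, g X Y = g Y X
  g_add_left : ∀ X Y Z, g (X + Y) Z = g X Z + g Y Z
  g_fsmul_left : ∀ f X Y, g (fsmul f X) Y = f * g X Y
  D_add_left : ∀ X Y Z, D (X + Y) Z = D X Z + D Y Z
  D_add_right : ∀ X Y Z, D X (Y + Z) = D X Y + D X Z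
  D_fsmul_left : ∀ f X Y, D (fsmul f X) Y = fsmul f (D X Y)
  D_leibniz : ∀ X f Y, D X (fsmul f Y) = fsmul (act X f) Y + fsmul f (D X Y)
  /-- metric compatibility: `X g(Y,Z) = g(∇_X Y, Z) + g(Y, ∇_X Z)` -/
  compat : ∀ X Y Z, act X (g Y Z) = g (D X Y) Z + g Y (D X Z)
  /-- the Levi-Civita connection is torsion free -/
  torsion_free : ∀ X Y, D X Y - D Y X = bracket X Y

namespace LeviCivitaSetting

variable {M VF : Type*} [AddCommGroup VF] [Module ℝ VF] (S : LeviCivitaSetting M VF)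

/-- `Z` is a Killing field iff the Lie derivative of the metric along `Z` vanishes:
`Z g(X,Y) = g([Z,X],Y) + g(X,[Z,Y])` for all vector fields `X, Y`. -/
def IsKilling (Z : VF) : Prop :=
  ∀ X Y, S.act Z (S.g X Y) = S.g (S.bracket Z X) Y + S.g X (S.bracket Z Y)

/-- The Riemann curvature tensor `R_{X,Y} Z = ∇_X ∇_Y Z - ∇_Y ∇_X Z - ∇_{[X,Y]} Z`. -/
def R (X Y Z : VF) : VF :=
  S.D X (S.D Y Z) - S.D Y (S.D X Z) - S.D (S.bracket X Y) Z

end LeviCivitaSetting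

namespace LeviCivitaSetting

variable {M VF : Type*} [AddCommGroup VF] [Module ℝ VF] (S : LeviCivitaSetting M VF)

/-- A map `B : VF → VF` is a `(1,1)`-tensor field iff it is additive and linear over functions. -/
def IsTensorial (B : VF → VF) : Prop :=
  (∀ X Y, B (X + Y) = B X + B Y) ∧ ∀ f X, B (S.fsmul f X) = S.fsmul f (B X)

/-- A `(1,1)`-tensor field `B` is skew-symmetric (a section of `𝔰𝔬(TM)`) iff
`g(B X, Y) + g(X, B Y) = 0` for all `X, Y`. -/
def IsSkew (B : VF → VF) : Prop := ∀ X Y, S.g (B X) Y + S.g X (B Y) = 0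

/-- The connection `∇̃` on the bundle `E = TM ⊕ 𝔰𝔬(TM)`:
`∇̃_X (v, B) = (∇_X v - B·X, ∇_X B - R_{X,v})`,
where a section of `E` is a pair of a vector field `v` and a `(1,1)`-tensor field `B`. -/
def pairConn (X : VF) (s : VF × (VF → VF)) : VF × (VF → VF) :=
  (S.D X s.1 - s.2 X, fun Y => S.D X (s.2 Y) - s.2 (S.D X Y) - S.R X s.1 Y)

/-- A section `(v, B)` of `E = TM ⊕ 𝔰𝔬(TM)` is parallel for `∇̃` iff `∇̃_X (v,B) = 0`
for every vector field `X`. -/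
def IsParallelPair (s : VF × (VF → VF)) : Prop := ∀ X, S.pairConn X s = 0

end LeviCivitaSetting

namespace LeviCivitaSetting

variable {M VF : Type*} [AddCommGroup VF] [Module ℝ VF] (S : LeviCivitaSetting M VF)

/-- The covariant derivative of a `(1,1)`-tensor field: `(∇_X T)(Y) = ∇_X (T Y) - T (∇_X Y)`. -/
def covDerT (X : VF) (T : VF → VF) : VF → VF :=
  fun Y => S.D X (T Y) - T (S.D X Y)

/-- The derivation action of a `(1,1)`-tensor `B` on a `(1,1)`-tensor `T`:
`(B·T)(Y) = B (T Y) - T (B Y)`. -/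
def derivActT (B T : VF → VF) : VF → VF := fun Y => B (T Y) - T (B Y)

/-- The equation `∇_v T = B · T` for a section `(v, B)` of `E = TM ⊕ 𝔰𝔬(TM)`. -/
def SatisfiesEq (T : VF → VF) (s : VF × (VF → VF)) : Prop :=
  S.covDerT s.1 T = derivActT s.2 T

/-- The covariant derivative of a `(1,2)`-tensor field `(X,Y) ↦ T' X Y` along `v`:
`(∇_v T')(X,Y) = ∇_v (T'(X,Y)) - T'(∇_v X, Y) - T'(X, ∇_v Y)`. -/
def covDerT2 (v : VF) (T' : VF → VF → VF) : VF → VF → VF :=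
  fun X Y => S.D v (T' X Y) - T' (S.D v X) Y - T' X (S.D v Y)

/-- The derivation action of `B` on a `(1,2)`-tensor field:
`(B·T')(X,Y) = B (T'(X,Y)) - T'(B X, Y) - T'(X, B Y)`. -/
def derivActT2 (B : VF → VF) (T' : VF → VF → VF) : VF → VF → VF :=
  fun X Y => B (T' X Y) - T' (B X) Y - T' X (B Y)

end LeviCivitaSetting

open LeviCivitaSetting in
/-- **Proposition 3.**  Let `T` be a tensor field on `M` and `(v,B)` a section of
`E = TM ⊕ 𝔰𝔬(TM)` satisfying `∇_v T = B·T`.  Then `∇̃_X (v,B)` satisfies the same equation for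
all vector fields `X` if and only if `(v,B)` also satisfies `∇_v (∇T) = B·(∇T)`
(here `∇T` is the `(1,2)`-tensor `(X,Y) ↦ (∇_X T)(Y)`). -/
theorem derived_section_eq_iff_next_order
    {M VF : Type*} [AddCommGroup VF] [Module ℝ VF] (S : LeviCivitaSetting M VF)
    (T : VF → VF) (hT : S.IsTensorial T)
    (v : VF) (B : VF → VF) (hB : S.IsTensorial B) (hskew : S.IsSkew B)
    (h0 : S.SatisfiesEq T (v, B)) :
    (∀ X, S.SatisfiesEq T (S.pairConn X (v, B))) ↔
      S.covDerT2 v (fun X Y => S.covDerT X T Y) = derivActT2 B (fun X Y => S.covDerT X T Y) := by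
  have Dsubr : ∀ X Y Z, S.D X (Y - Z) = S.D X Y - S.D X Z := fun X Y Z =>
    (AddMonoidHom.mk' (S.D X) (S.D_add_right X)).map_sub Y Z
  have Daddr := S.D_add_right
  have Dsubl : ∀ X Y Z, S.D (X - Y) Z = S.D X Z - S.D Y Z := fun X Y Z =>
    (AddMonoidHom.mk' (fun W => S.D W Z) (fun a b => S.D_add_left a b Z)).map_sub X Y
  have Tsub : ∀ X Y, T (X - Y) = T X - T Y := fun X Y =>
    (AddMonoidHom.mk' T hT.1).map_sub X Y
  have Tadd := hT.1
  have Bsub : ∀ X Y, B (X - Y) = B X - B Y := fun X Y =>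
    (AddMonoidHom.mk' B hB.1).map_sub X Y
  -- pointwise form of h0
  have h1 : ∀ Z, B (T Z) = S.D v (T Z) - T (S.D v Z) + T (B Z) := by
    intro Z
    have h := congrFun h0 Z
    simp only [LeviCivitaSetting.covDerT, LeviCivitaSetting.derivActT] at h
    rw [h]
    abel
  -- the key algebraic identity
  have key : ∀ X Y,
      (S.covDerT (S.D X v - B X) T Y
        - LeviCivitaSetting.derivActT (fun Z => S.D X (B Z) - B (S.D X Z) - S.R X v Z) T Y)
      = -(S.covDerT2 v (fun X Y => S.covDerT X T Y) X Y
        - LeviCivitaSetting.derivActT2 B (fun X Y => S.covDerT X T Y) X Y) := by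
    intro X Y
    have hbr : S.bracket X v = S.D X v - S.D v X := (S.torsion_free X v).symm
    have hA' : S.D X (B (T Y)) = S.D X (S.D v (T Y) - T (S.D v Y) + T (B Y)) := by
      rw [h1 Y]
    have hC := h1 (S.D X Y)
    simp only [LeviCivitaSetting.covDerT, LeviCivitaSetting.derivActT,
      LeviCivitaSetting.covDerT2, LeviCivitaSetting.derivActT2, LeviCivitaSetting.R, hbr,
      Dsubr, Dsubl, Daddr, Tsub, Tadd, Bsub] at hA' hC ⊢
    rw [hA', hC]
    abel
  constructor
  · intro h
    funext X Y
    have hX0 := h X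
    simp only [LeviCivitaSetting.SatisfiesEq, LeviCivitaSetting.pairConn] at hX0
    have hX := congrFun hX0 Y
    have k := key X Y
    rw [hX, sub_self] at k
    have : S.covDerT2 v (fun X Y => S.covDerT X T Y) X Y
        - LeviCivitaSetting.derivActT2 B (fun X Y => S.covDerT X T Y) X Y = 0 :=
      neg_eq_zero.mp k.symm
    exact sub_eq_zero.mp this
  · intro h X
    simp only [LeviCivitaSetting.SatisfiesEq, LeviCivitaSetting.pairConn]
    funext Y
    have hX := congrFun (congrFun h X) Y
    have k := key X Y
    rw [hX, sub_self, neg_zero, sub_eq_zero] at k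
    exact k
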